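/- Let G be an r-SPTG in which every non-final location is urgent, and let ν ∈ [0,r]. For every location ℓ, Val_G(ℓ,ν) belongs to possval_ν ∪ {−∞, +∞}, where Z*_ν = {n + φ_ℓ(ν) : n ∈ ℤ, ℓ ∈ L_f} and possval_ν = [−(|L|−1)·P_T − P_f, |L|·P_T + P_f] ∩ Z*_ν. Moreover possval_ν has cardinality at most |L_f|·((2|L|−1)·P_T + 2·P_f + 1). -/

import Mathlib

/-!
Common formalization of one-clock priced timed games (PTGs), following
"Simple Priced Timed Games are not That Simple".
-/

namespace PTGPaper

/-- The three kinds of locations: locations of player Min, of player Max, and final locations. -/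
inductive Owner : Type
  | min : Owner
  | max : Owner
  | final : Owner
deriving DecidableEq

/-- A transition of a one-clock priced timed game: a source location, a guard
(an interval with endpoints `lo`, `hi`, with openness flags `loOpen`, `hiOpen`),
a reset flag, a discrete price, and a target location. -/
structure PTrans (L : Type) where
  src : L
  lo : ℝ
  hi : ℝ
  loOpen : Bool
  hiOpen : Bool
  reset : Bool
  price : ℤ
  tgt : L

noncomputable instance {L : Type} : DecidableEq (PTrans L) := Classical.decEq _

/-- Membership of a clock value in the guard of a transition. -/
def PTrans.memGuard {L : Type} (δ : PTrans L) (ν : ℝ) : Prop :=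
  (if δ.loOpen then δ.lo < ν else δ.lo ≤ ν) ∧
  (if δ.hiOpen then ν < δ.hi else ν ≤ δ.hi)

/-- A one-clock priced timed game. -/
structure PTG where
  Loc : Type
  locFin : Fintype Loc
  locDec : DecidableEq Loc
  owner : Loc → Owner
  urgent : Loc → Bool
  M : ℕ
  trans : Finset (PTrans Loc)
  price : Loc → ℤ
  fcost : Loc → ℝ → ℝ

attribute [instance] PTG.locFin PTG.locDec

/-- A configuration: a location together with a clock valuation. -/
abbrev PTG.Config (G : PTG) := G.Loc × ℝ

/-- `G.Move s s' t δ c` holds if from configuration `s`, waiting `t` time units and then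
taking transition `δ` is legal, leads to configuration `s'` and costs `c`. -/
def PTG.Move (G : PTG) (s s' : G.Config) (t : ℝ) (δ : PTrans G.Loc) (c : ℝ) : Prop :=
  δ ∈ G.trans ∧ δ.src = s.1 ∧ 0 ≤ t ∧ (G.urgent s.1 = true → t = 0) ∧
  δ.memGuard (s.2 + t) ∧ s'.1 = δ.tgt ∧
  s'.2 = (if δ.reset then 0 else s.2 + t) ∧
  c = (δ.price : ℝ) + t * (G.price s.1 : ℝ)

/-- A finite play (history): an initial configuration followed by a list of steps,
each step consisting of a delay, the transition taken, and the configuration reached. -/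
structure Hist (L : Type) where
  start : L × ℝ
  steps : List (ℝ × PTrans L × (L × ℝ))

namespace Hist

variable {L : Type}

def lastFrom (s : L × ℝ) : List (ℝ × PTrans L × (L × ℝ)) → L × ℝ
  | [] => s
  | (_, _, s') :: rest => lastFrom s' rest

/-- The last configuration of a finite play. -/
def last (h : Hist L) : L × ℝ := lastFrom h.start h.steps

def costFrom (π : L → ℤ) (s : L × ℝ) : List (ℝ × PTrans L × (L × ℝ)) → ℝ
  | [] => 0
  | (t, δ, s') :: rest => ((δ.price : ℝ) + t * (π s.1 : ℝ)) + costFrom π s' rest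

/-- The sum of the prices of the discrete transitions along a finite play. -/
def discSum (h : Hist L) : ℤ := (h.steps.map (fun st => st.2.1.price)).sum

/-- The prefix of a finite play consisting of its first `i` steps. -/
def take (h : Hist L) (i : ℕ) : Hist L := ⟨h.start, h.steps.take i⟩

end Hist

/-- Validity of a sequence of steps, starting from a given configuration. -/
def PTG.ValidFrom (G : PTG) : G.Config → List (ℝ × PTrans G.Loc × G.Config) → Prop
  | _, [] => True
  | s, (t, δ, s') :: rest => (∃ c, G.Move s s' t δ c) ∧ G.ValidFrom s' rest

/-- A valid finite play of `G`. -/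
def PTG.HistValid (G : PTG) (h : Hist G.Loc) : Prop :=
  0 ≤ h.start.2 ∧ h.start.2 ≤ (G.M : ℝ) ∧ G.ValidFrom h.start h.steps

/-- Accumulated cost of the moves of a finite play (without any final cost). -/
def PTG.accCost (G : PTG) (h : Hist G.Loc) : ℝ := Hist.costFrom G.price h.start h.steps

/-- A (deterministic) strategy, given as a function from finite plays to
a pair (delay, transition). -/
abbrev StratFun (L : Type) := Hist L → ℝ × PTrans L

/-- A finite play is consistent with strategy `σ` of the player owning locations of kind `P`
if at every step taken from a location of that player, the move is the one prescribed
by `σ` on the corresponding prefix. -/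
def PTG.Consistent (G : PTG) (P : Owner) (σ : StratFun G.Loc) (h : Hist G.Loc) : Prop :=
  ∀ (i : ℕ) (hi : i < h.steps.length),
    G.owner (h.take i).last.1 = P →
    ((h.steps.get ⟨i, hi⟩).1, (h.steps.get ⟨i, hi⟩).2.1) = σ (h.take i)

/-- A strategy of the player owning the locations of kind `P` is valid if it proposes
a legal move after every valid finite play ending in a location of that player. -/
def PTG.StratValid (G : PTG) (P : Owner) (σ : StratFun G.Loc) : Prop :=
  ∀ h : Hist G.Loc, G.HistValid h → G.owner h.last.1 = P →
    ∃ s' c, G.Move h.last s' (σ h).1 (σ h).2 c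

def PTG.MinValid (G : PTG) (σ : StratFun G.Loc) : Prop := G.StratValid Owner.min σ

def PTG.MaxValid (G : PTG) (τ : StratFun G.Loc) : Prop := G.StratValid Owner.max τ

/-- The configuration reached from `s` by the move `td = (delay, transition)`. -/
def PTG.nextCfg (G : PTG) (s : G.Config) (td : ℝ × PTrans G.Loc) : G.Config :=
  (td.2.tgt, if td.2.reset then 0 else s.2 + td.1)

/-- The finite play of length (at most) `n` obtained from initial configuration `s₀` when
Min plays `σ` and Max plays `τ` (the play stops growing when a final location is reached). -/
def PTG.histOf (G : PTG) (σ τ : StratFun G.Loc) (s₀ : G.Config) : ℕ → Hist G.Loc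
  | 0 => ⟨s₀, []⟩
  | n + 1 =>
    let h := G.histOf σ τ s₀ n
    if G.owner h.last.1 = Owner.final then h
    else
      let td := if G.owner h.last.1 = Owner.min then σ h else τ h
      ⟨h.start, h.steps ++ [(td.1, td.2, G.nextCfg h.last td)]⟩

open Classical in
/-- The cost of the play from `s₀` determined by the profile `(σ, τ)`: `+∞` if no final
location is ever reached, and otherwise the accumulated cost up to the first visit of a
final location, plus the final cost function of that location evaluated at the current
clock value. -/
noncomputable def PTG.playCost (G : PTG) (σ τ : StratFun G.Loc) (s₀ : G.Config) : EReal :=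
  if hx : ∃ n, G.owner ((G.histOf σ τ s₀ n).last.1) = Owner.final then
    (((G.accCost (G.histOf σ τ s₀ (Nat.find hx)) +
        G.fcost ((G.histOf σ τ s₀ (Nat.find hx)).last.1)
          ((G.histOf σ τ s₀ (Nat.find hx)).last.2)) : ℝ) : EReal)
  else ⊤

/-- `Val^σ(s)`, the value of a Min strategy `σ`. -/
noncomputable def PTG.minValue (G : PTG) (σ : StratFun G.Loc) (s : G.Config) : EReal :=
  ⨆ τ : {τ : StratFun G.Loc // G.MaxValid τ}, G.playCost σ τ.1 s

/-- `Val^τ(s)`, the value of a Max strategy `τ`. -/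
noncomputable def PTG.maxValue (G : PTG) (τ : StratFun G.Loc) (s : G.Config) : EReal :=
  ⨅ σ : {σ : StratFun G.Loc // G.MinValid σ}, G.playCost σ.1 τ s

/-- The upper value of the game. -/
noncomputable def PTG.uval (G : PTG) (s : G.Config) : EReal :=
  ⨅ σ : {σ : StratFun G.Loc // G.MinValid σ}, G.minValue σ.1 s

/-- The lower value of the game. -/
noncomputable def PTG.lval (G : PTG) (s : G.Config) : EReal :=
  ⨆ τ : {τ : StratFun G.Loc // G.MaxValid τ}, G.maxValue τ.1 s

/-- The value of the game (games are determined, so this coincides with the upper value). -/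
noncomputable def PTG.val (G : PTG) (s : G.Config) : EReal := G.lval s

/-- The fake value of a Min strategy `σ` at configuration `s`: the supremum of the costs of
the plays consistent with `σ` from `s` that do reach a final location. -/
noncomputable def PTG.fakeVal (G : PTG) (σ : StratFun G.Loc) (s : G.Config) : EReal :=
  sSup {x : EReal | ∃ h : Hist G.Loc, h.start = s ∧ G.HistValid h ∧
    G.Consistent Owner.min σ h ∧ G.owner h.last.1 = Owner.final ∧
    x = (((G.accCost h + G.fcost h.last.1 h.last.2) : ℝ) : EReal)}

/-- Well-formedness of a PTG: transitions leave non-final locations only, guards are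
contained in `[0, M]`, urgent locations are non-final, final cost functions are affine with
rational coefficients, and the game is deadlock-free. -/
def PTG.WF (G : PTG) : Prop :=
  (∀ δ ∈ G.trans, G.owner δ.src ≠ Owner.final) ∧
  (∀ δ ∈ G.trans, 0 ≤ δ.lo ∧ δ.hi ≤ (G.M : ℝ)) ∧
  (∀ ℓ, G.urgent ℓ = true → G.owner ℓ ≠ Owner.final) ∧
  (∀ ℓ, G.owner ℓ = Owner.final → ∃ a b : ℚ, ∀ ν : ℝ, G.fcost ℓ ν = (a : ℝ) * ν + (b : ℝ)) ∧
  (∀ (ℓ : G.Loc) (ν : ℝ), G.owner ℓ ≠ Owner.final → 0 ≤ ν → ν ≤ (G.M : ℝ) →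
    ∃ s' t δ c, G.Move (ℓ, ν) s' t δ c)

/-- All guards have natural-number endpoints. -/
def PTG.NatEndpoints (G : PTG) : Prop :=
  ∀ δ ∈ G.trans, (∃ n : ℕ, δ.lo = (n : ℝ)) ∧ ∃ n : ℕ, δ.hi = (n : ℝ)

/-- `P_T`: the largest absolute value of a transition price. -/
def PTG.PT (G : PTG) : ℕ := G.trans.sup fun δ => δ.price.natAbs

/-- `P_L`: the largest absolute value of a location price-rate. -/
def PTG.PL (G : PTG) : ℕ := Finset.univ.sup fun ℓ : G.Loc => (G.price ℓ).natAbs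

/-- `P_f`: the largest absolute value taken by a final cost function on `[0, r]`. -/
noncomputable def PTG.Pf (G : PTG) (r : ℝ) : ℝ :=
  sSup {x : ℝ | ∃ (ℓ : G.Loc) (ν : ℝ), G.owner ℓ = Owner.final ∧ 0 ≤ ν ∧ ν ≤ r ∧
    x = |G.fcost ℓ ν|}

/-- The number of locations `|L|`. -/
def PTG.nLoc (G : PTG) : ℕ := Fintype.card G.Loc

/-- The number of final locations `|L_f|`. -/
def PTG.nFin (G : PTG) : ℕ :=
  (Finset.univ.filter fun ℓ : G.Loc => G.owner ℓ = Owner.final).card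

/-- A measure of the size of `G` (locations, transitions, and binary encodings of
the numerical constants). -/
def PTG.size (G : PTG) : ℕ :=
  G.nLoc + G.trans.card + Nat.log2 (G.M + 2) + Nat.log2 (G.PT + 2) + Nat.log2 (G.PL + 2) + 2

/-- `G` is an `r`-SPTG: every transition has guard `[0, r]` and performs no reset. -/
def PTG.IsSPTG (G : PTG) (r : ℝ) : Prop :=
  0 ≤ r ∧ r ≤ 1 ∧ ∀ δ ∈ G.trans,
    δ.lo = 0 ∧ δ.hi = r ∧ δ.loOpen = false ∧ δ.hiOpen = false ∧ δ.reset = false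

/-- The left end of the `i`-th interval determined by the points `pt` (with the convention
`ν₀ = min 0 (pt 0)`). -/
def prevPt {k : ℕ} (pt : Fin (k + 1) → ℝ) (i : Fin (k + 1)) : ℝ :=
  if (i : ℕ) = 0 then min 0 (pt 0) else
    pt ⟨(i : ℕ) - 1, lt_of_le_of_lt (Nat.sub_le _ _) i.isLt⟩

/-- A finite positional (FP) strategy of the player owning locations of kind `P` in an
`r`-SPTG: a memoryless strategy which, on each location of that player, is described by
finitely many rational threshold points `0 ≤ ν₁ < ⋯ < ν_k = r` and transitions
`δ₁, …, δ_k`, and on each induced interval either always plays immediately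
or always waits until the right endpoint of the interval. -/
structure FPStrat (G : PTG) (r : ℝ) (P : Owner) where
  strat : StratFun G.Loc
  valid : G.StratValid P strat
  memoryless : ∀ h h' : Hist G.Loc, G.HistValid h → G.HistValid h' →
    h.last = h'.last → strat h = strat h'
  points : Finset ℝ
  points_rat : ∀ p ∈ points, ∃ q : ℚ, p = (q : ℝ)
  points_mem : ∀ p ∈ points, 0 ≤ p ∧ p ≤ r
  r_mem : r ∈ points
  piecewise : ∀ ℓ : G.Loc, G.owner ℓ = P →
    ∃ (k : ℕ) (pt : Fin (k + 1) → ℝ) (δ : Fin (k + 1) → PTrans G.Loc),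
      StrictMono pt ∧ 0 ≤ pt 0 ∧ pt (Fin.last k) = r ∧ (∀ i, pt i ∈ points) ∧
      (∀ i : Fin (k + 1),
        (∀ ν : ℝ, prevPt pt i < ν → ν ≤ pt i → strat ⟨(ℓ, ν), []⟩ = (0, δ i)) ∨
        (∀ ν : ℝ, prevPt pt i < ν → ν ≤ pt i → strat ⟨(ℓ, ν), []⟩ = (pt i - ν, δ i))) ∧
      (0 < pt 0 → strat ⟨(ℓ, 0), []⟩ = (pt 0, δ 0))

/-- The size `|σ|` of an FP strategy: the number of intervals generated by its points. -/
def FPStrat.size {G : PTG} {r : ℝ} {P : Owner} (σ : FPStrat G r P) : ℕ := σ.points.card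

/-- Two clock values lie in the same interval of the partition induced by `pts`
(intervals being half-open to the left). -/
def SameInterval (pts : Finset ℝ) (ν ν' : ℝ) : Prop := ∀ p ∈ pts, (ν ≤ p ↔ ν' ≤ p)

/-- A negative cycle (NC) strategy of Min: an FP strategy such that along every consistent
finite play which starts and ends in the same location, with both clock values in the same
interval of the strategy, the sum of the prices of the discrete transitions is at most −1. -/
def FPStrat.IsNC {G : PTG} {r : ℝ} (σ : FPStrat G r Owner.min) : Prop :=
  ∀ h : Hist G.Loc, G.HistValid h → G.Consistent Owner.min σ.strat h →
    h.steps ≠ [] → h.last.1 = h.start.1 → SameInterval σ.points h.start.2 h.last.2 →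
    h.discSum ≤ -1

/-- A fake-optimal Min strategy: its fake value equals the value of the game everywhere. -/
def FPStrat.FakeOpt {G : PTG} {r : ℝ} (σ : FPStrat G r Owner.min) : Prop :=
  ∀ (ℓ : G.Loc) (ν : ℝ), 0 ≤ ν → ν ≤ r → G.fakeVal σ.strat (ℓ, ν) = G.val (ℓ, ν)

/-- An optimal Max FP strategy: its value equals the value of the game everywhere. -/
def FPStrat.Opt {G : PTG} {r : ℝ} (τ : FPStrat G r Owner.max) : Prop :=
  ∀ (ℓ : G.Loc) (ν : ℝ), 0 ≤ ν → ν ≤ r → G.maxValue τ.strat (ℓ, ν) = G.val (ℓ, ν)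

/-- A cost function on `[0, r]`: either infinite, or continuous piecewise affine with
finitely many cutpoints, all cutpoints and the values at them being rational. -/
def IsCostFunctionOn (r : ℝ) (f : ℝ → EReal) : Prop :=
  (∀ ν : ℝ, 0 ≤ ν → ν ≤ r → f ν = ⊤) ∨
  (∀ ν : ℝ, 0 ≤ ν → ν ≤ r → f ν = ⊥) ∨
  ∃ (n : ℕ) (a : Fin (n + 1) → ℚ),
    Monotone a ∧ ((a 0 : ℝ) = 0) ∧ ((a (Fin.last n) : ℝ) = r) ∧
    (∀ i, ∃ q : ℚ, f ((a i : ℚ) : ℝ) = ((q : ℝ) : EReal)) ∧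
    ∀ i : Fin n, ∃ α β : ℝ, ∀ ν : ℝ, ((a i.castSucc : ℚ) : ℝ) ≤ ν → ν ≤ ((a i.succ : ℚ) : ℝ) →
      f ν = ((α * ν + β : ℝ) : EReal)

/-- An `r`-SPTG is finitely optimal if Min has a fake-optimal NC strategy, Max has an optimal
FP strategy, and the value function of every location is a cost function. -/
def PTG.FinitelyOptimal (G : PTG) (r : ℝ) : Prop :=
  (∃ σ : FPStrat G r Owner.min, σ.IsNC ∧ σ.FakeOpt) ∧
  (∃ τ : FPStrat G r Owner.max, τ.Opt) ∧
  ∀ ℓ : G.Loc, IsCostFunctionOn r fun ν => G.val (ℓ, ν)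

/-- The finite set `F_G` of affine functions `k + φ_ℓ`, for `ℓ` final and
`k ∈ [−(|L|−1)·P_T, |L|·P_T] ∩ ℤ`. -/
def PTG.FF (G : PTG) : Set (ℝ → ℝ) :=
  {f | ∃ (ℓ : G.Loc) (k : ℤ), G.owner ℓ = Owner.final ∧
    -(((G.nLoc : ℤ) - 1) * (G.PT : ℤ)) ≤ k ∧ k ≤ (G.nLoc : ℤ) * (G.PT : ℤ) ∧
    f = fun ν => (k : ℝ) + G.fcost ℓ ν}

noncomputable def PTG.FFcard (G : PTG) : ℕ := G.FF.ncard

/-- The set of possible cutpoints: intersection points of two distinct functions of `F_G`. -/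
def PTG.posscp (G : PTG) (r : ℝ) : Set ℝ :=
  {ν | 0 ≤ ν ∧ ν ≤ r ∧ ∃ f₁ ∈ G.FF, ∃ f₂ ∈ G.FF, f₁ ≠ f₂ ∧ f₁ ν = f₂ ν}

/-- The construction `Wait(G, r, x)`: all guards are restricted to `[0, r]` and, for every
non-urgent location `ℓ`, a clone final location `ℓ^f` is added, with final cost function
`ν ↦ (r − ν)·π(ℓ) + x_ℓ`, together with a price-0 transition `(ℓ, ℓ^f)`.
(Clone locations are created for all locations; those of urgent or final locations are
unreachable since no transition leads to them.) -/
noncomputable def PTG.wait (G : PTG) (r : ℝ) (x : G.Loc → ℝ) : PTG where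
  Loc := G.Loc ⊕ G.Loc
  locFin := inferInstance
  locDec := inferInstance
  owner := Sum.elim G.owner fun _ => Owner.final
  urgent := Sum.elim G.urgent fun _ => false
  M := G.M
  trans :=
    (G.trans.image fun δ =>
      { src := Sum.inl δ.src, lo := max δ.lo 0, hi := min δ.hi r,
        loOpen := δ.loOpen, hiOpen := δ.hiOpen, reset := δ.reset,
        price := δ.price, tgt := Sum.inl δ.tgt }) ∪
    ((Finset.univ.filter fun ℓ : G.Loc =>
        G.owner ℓ ≠ Owner.final ∧ G.urgent ℓ = false).image
      fun ℓ => { src := Sum.inl ℓ, lo := 0, hi := r, loOpen := false, hiOpen := false,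
                 reset := false, price := 0, tgt := Sum.inr ℓ })
  price := Sum.elim G.price fun _ => 0
  fcost := Sum.elim G.fcost fun ℓ ν => (r - ν) * (G.price ℓ : ℝ) + x ℓ

/-- `G_r = Wait(G, r, (Val_G(ℓ, r))_ℓ)`. -/
noncomputable def PTG.Gr (G : PTG) (r : ℝ) : PTG :=
  G.wait r fun ℓ => (G.val (ℓ, r)).toReal

/-- Making the locations indicated by `S` urgent. -/
def PTG.makeUrgent (G : PTG) (S : G.Loc → Bool) : PTG :=
  { G with urgent := fun ℓ => G.urgent ℓ || S ℓ }

/-- `G_{L', r}`: the game `G_r` in which all locations of `L'` are made urgent. -/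
noncomputable def PTG.GLr (G : PTG) (S : G.Loc → Bool) (r : ℝ) : PTG :=
  (G.Gr r).makeUrgent (Sum.elim S fun _ => false)

/-- The operator `Next_{L'}(r)`: the supremum of the `r' ≤ r` such that the value functions
of `G_{L',r}` and of `G` coincide on `[r', r]`. -/
noncomputable def PTG.Next (G : PTG) (S : G.Loc → Bool) (r : ℝ) : ℝ :=
  sSup {r' : ℝ | 0 ≤ r' ∧ r' ≤ r ∧ ∀ (ℓ : G.Loc) (ν : ℝ), r' ≤ ν → ν ≤ r →
    (G.GLr S r).val (Sum.inl ℓ, ν) = G.val (ℓ, ν)}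

/-- Turning additionally location `ℓ` urgent: `L' ∪ {ℓ}` as a Boolean predicate. -/
def addLoc (G : PTG) (S : G.Loc → Bool) (ℓ : G.Loc) : G.Loc → Bool :=
  fun ℓ' => S ℓ' || decide (ℓ' = ℓ)

/-- The singleton `{ℓ}` as a Boolean predicate. -/
def singLoc (G : PTG) (ℓ : G.Loc) : G.Loc → Bool := fun ℓ' => decide (ℓ' = ℓ)

/-- `f` is, on `[0, r]`, piecewise affine with at most `N` cutpoints. -/
def PWAffineOn (r : ℝ) (f : ℝ → EReal) (N : ℕ) : Prop :=
  ∃ n : ℕ, n ≤ N ∧ ∃ a : Fin (n + 2) → ℝ,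
    Monotone a ∧ a 0 = 0 ∧ a (Fin.last (n + 1)) = r ∧
    ∀ i : Fin (n + 1), ∃ α β : ℝ, ∀ ν : ℝ, a i.castSucc ≤ ν → ν ≤ a i.succ →
      f ν = ((α * ν + β : ℝ) : EReal)

/-- `f` has a cutpoint in `[a, b)`: some point of `[a, b)` has no neighbourhood
(within `[0,1]`) on which `f` is affine. -/
def HasCutpointIn (f : ℝ → EReal) (a b : ℝ) : Prop :=
  ∃ x : ℝ, a ≤ x ∧ x < b ∧ ∀ ε : ℝ, 0 < ε →
    ¬ ∃ α β : ℝ, ∀ ν : ℝ, max 0 (x - ε) ≤ ν → ν ≤ min 1 (x + ε) →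
      f ν = ((α * ν + β : ℝ) : EReal)

/-- The endpoints of the guards of `G`, together with `0`. -/
noncomputable def PTG.endpoints (G : PTG) : Finset ℝ :=
  insert 0 ((G.trans.image PTrans.lo) ∪ (G.trans.image PTrans.hi))

/-- `s` is a region of `G`: a singleton of an endpoint, or an open interval between two
consecutive endpoints. -/
def PTG.IsRegion (G : PTG) (s : Set ℝ) : Prop :=
  (∃ e ∈ G.endpoints, s = {e}) ∨
  ∃ e ∈ G.endpoints, ∃ e' ∈ G.endpoints, e < e' ∧
    (∀ p ∈ G.endpoints, p ≤ e ∨ e' ≤ p) ∧ s = Set.Ioo e e'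

/-- No cycle of the configuration graph of `G` traverses a resetting transition. -/
def PTG.ResetAcyclic (G : PTG) : Prop :=
  ¬ ∃ h : Hist G.Loc, G.HistValid h ∧ h.steps ≠ [] ∧ h.last = h.start ∧
      ∃ st ∈ h.steps, st.2.1.reset = true

/-- An `ε`-optimal strategy of Min. -/
def PTG.MinEpsOpt (G : PTG) (σ : StratFun G.Loc) (ε : ℝ) : Prop :=
  G.MinValid σ ∧ ∀ (ℓ : G.Loc) (ν : ℝ), 0 ≤ ν → ν ≤ (G.M : ℝ) →
    G.minValue σ (ℓ, ν) ≤ G.val (ℓ, ν) + (ε : EReal)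

/-- An `ε`-optimal strategy of Max. -/
def PTG.MaxEpsOpt (G : PTG) (τ : StratFun G.Loc) (ε : ℝ) : Prop :=
  G.MaxValid τ ∧ ∀ (ℓ : G.Loc) (ν : ℝ), 0 ≤ ν → ν ≤ (G.M : ℝ) →
    G.val (ℓ, ν) - (ε : EReal) ≤ G.maxValue τ (ℓ, ν)

end PTGPaper
namespace PTGPaper

/-- The set `Z*_ν = {n + φ_ℓ(ν) : n ∈ ℤ, ℓ ∈ L_f}`. -/
def PTG.Zstar (G : PTG) (ν : ℝ) : Set ℝ :=
  {x | ∃ (n : ℤ) (ℓ : G.Loc), G.owner ℓ = Owner.final ∧ x = (n : ℝ) + G.fcost ℓ ν}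

/-- The set `possval_ν = [−(|L|−1)·P_T − P_f, |L|·P_T + P_f] ∩ Z*_ν`. -/
noncomputable def PTG.possval (G : PTG) (r ν : ℝ) : Set ℝ :=
  {x ∈ G.Zstar ν | -(((G.nLoc : ℝ) - 1) * (G.PT : ℝ)) - G.Pf r ≤ x ∧
    x ≤ (G.nLoc : ℝ) * (G.PT : ℝ) + G.Pf r}

end PTGPaper

/-!
Without delays the clock stays at `ν`, so the game is a finite min-cost reachability game with
integer weights and final payoffs `φ_ℓ(ν)`. Its value is the limit of value iteration: Min
secures the `n`-round value by playing greedily for the remaining rounds, and Max secures the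
limit, a fixed point of the one-round operator, by playing greedily for it. The iterates lie in
the discrete set `Z*_ν ∪ {+∞}`, so a finite limit is reached at a finite stage. Following moves
along which this stage strictly decreases leads to a final location through distinct locations,
so a finite value is `k + φ_ℓ(ν)` with `|k| ≤ (|L| - 1)·P_T`.
-/

theorem Finset.sup_iInf_of_antitone {α ι : Type*} [Order.Coframe α] (s : Finset ι)
    {f : ι → ℕ → α} (hf : ∀ i, Antitone (f i)) :
    s.sup (fun i => ⨅ n, f i n) = ⨅ n, s.sup (fun i => f i n) := by
  classical
  induction s using Finset.induction_on with
  | empty => simp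
  | insert a s _ ih =>
    simp only [Finset.sup_insert, ih]
    exact (iInf_sup_of_antitone (hf a) fun _ _ hmn => Finset.sup_mono_fun fun i _ => hf i hmn).symm

theorem Finset.inf_iInf_comm {α ι κ : Type*} [CompleteLattice α] (s : Finset ι)
    (f : ι → κ → α) :
    s.inf (fun i => ⨅ n, f i n) = ⨅ n, s.inf (fun i => f i n) := by
  simp only [Finset.inf_eq_iInf]
  rw [iInf_comm]
  congr 1; ext i; rw [iInf_comm]

theorem Finset.exists_eq_inf_of_le_of_inf_eq {α ι : Type*} [LinearOrder α] [OrderTop α]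
    {s : Finset ι} (hs : s.Nonempty) {f g : ι → α} (hgf : ∀ i ∈ s, g i ≤ f i)
    (h : s.inf f = s.inf g) : ∃ i ∈ s, f i = s.inf f ∧ g i = s.inf f := by
  obtain ⟨i, hi, hfi⟩ := s.exists_mem_eq_inf hs f
  refine ⟨i, hi, hfi.symm, le_antisymm ?_ ?_⟩
  · exact (hgf i hi).trans hfi.ge
  · exact h.trans_le (Finset.inf_le hi)

theorem Finset.exists_eq_sup_of_le_of_sup_eq {α ι : Type*} [LinearOrder α] [OrderBot α]
    {s : Finset ι} (hs : s.Nonempty) {f g : ι → α} (hgf : ∀ i ∈ s, g i ≤ f i)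
    (h : s.sup f = s.sup g) : ∃ i ∈ s, f i = s.sup f ∧ g i = s.sup f := by
  obtain ⟨i, hi, hgi⟩ := s.exists_mem_eq_sup hs g
  refine ⟨i, hi, le_antisymm ?_ ?_, ?_⟩
  · exact Finset.le_sup hi
  · exact h.trans_le (hgi.trans_le (hgf i hi))
  · rw [h, hgi]

theorem EReal.coe_add_iInf {ι : Sort*} (c : ℝ) (f : ι → EReal) :
    (c : EReal) + ⨅ i, f i = ⨅ i, (c : EReal) + f i :=
  Monotone.map_iInf_of_continuousAt (f := fun x => (c : EReal) + x)
    ((EReal.continuousAt_add (Or.inl (EReal.coe_ne_top c)) (Or.inl (EReal.coe_ne_bot c))).comp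
      (continuousAt_const.prodMk continuousAt_id))
    (fun _ _ h => add_le_add_right h _) (EReal.coe_add_top c)

theorem EReal.eq_sub_of_coe_add_eq {c v : ℝ} {x : EReal} (h : (c : EReal) + x = v) :
    x = ((v - c : ℝ) : EReal) := by
  rw [← EReal.add_sub_cancel_left (a := x) (b := c), h, EReal.coe_sub]

theorem EReal.coe_add_left_cancel {c : ℝ} {x y : EReal} (h : (c : EReal) + x = c + y) :
    x = y := by
  rw [← EReal.add_sub_cancel_left (a := x) (b := c), h, EReal.add_sub_cancel_left]

theorem Antitone.exists_eq_iInf_of_finite {α : Type*} [CompleteLinearOrder α] {f : ℕ → α}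
    (hf : Antitone f) (N : ℕ) (hfin : (Set.range f ∩ Set.Iic (f N)).Finite) :
    ∃ n, f n = ⨅ i, f i := by
  obtain ⟨_, ⟨⟨n, rfl⟩, hnN⟩, hmin⟩ :=
    Set.exists_min_image _ id hfin ⟨f N, ⟨N, rfl⟩, le_rfl⟩
  refine ⟨n, le_antisymm (le_iInf fun i => ?_) (iInf_le f n)⟩
  rcases le_total N i with hNi | hiN
  · exact hmin (f i) ⟨⟨i, rfl⟩, hf hNi⟩
  · exact hnN.trans (hf hiN)

theorem Int.card_Icc_ceil_floor_le {x y : ℝ} (hxy : x ≤ y + 1) :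
    ((Finset.Icc ⌈x⌉ ⌊y⌋).card : ℝ) ≤ y - x + 1 := by
  have hcard : ((Finset.Icc ⌈x⌉ ⌊y⌋).card : ℤ) = max (⌊y⌋ + 1 - ⌈x⌉) 0 := by
    rw [Int.card_Icc, Int.toNat_eq_max]
  calc ((Finset.Icc ⌈x⌉ ⌊y⌋).card : ℝ)
        = (((Finset.Icc ⌈x⌉ ⌊y⌋).card : ℤ) : ℝ) := rfl
    _ = max ((⌊y⌋ : ℝ) + 1 - ⌈x⌉) 0 := by rw [hcard]; push_cast; rfl
    _ ≤ y - x + 1 := max_le (by linarith [Int.floor_le y, Int.le_ceil x]) (by linarith)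

namespace PTGPaper

structure PTG.IsUrgentSPTG (G : PTG) (r : ℝ) : Prop where
  wf : G.WF
  sptg : G.IsSPTG r
  urgent : ∀ ℓ : G.Loc, G.owner ℓ ≠ Owner.final → G.urgent ℓ = true

noncomputable def PTrans.valueThrough {L : Type} (δ : PTrans L) (V : L → EReal) : EReal :=
  ((δ.price : ℝ) : EReal) + V δ.tgt

lemma PTrans.valueThrough_mono {L : Type} (δ : PTrans L) : Monotone δ.valueThrough :=
  fun _ _ h => add_le_add_right (h δ.tgt) _

lemma Hist.lastFrom_append {L : Type} (s : L × ℝ) (l : List (ℝ × PTrans L × (L × ℝ)))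
    (x : ℝ × PTrans L × (L × ℝ)) : Hist.lastFrom s (l ++ [x]) = x.2.2 := by
  induction l generalizing s with
  | nil => rfl
  | cons a l ih => exact ih a.2.2

namespace PTG

variable {G : PTG}

def outTrans (G : PTG) (ℓ : G.Loc) : Finset (PTrans G.Loc) := G.trans.filter (·.src = ℓ)

lemma mem_outTrans {ℓ : G.Loc} {δ : PTrans G.Loc} :
    δ ∈ G.outTrans ℓ ↔ δ ∈ G.trans ∧ δ.src = ℓ :=
  Finset.mem_filter

lemma Move.mem_outTrans {s s' : G.Config} {t : ℝ} {δ : PTrans G.Loc} {c : ℝ}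
    (hmv : G.Move s s' t δ c) : δ ∈ G.outTrans s.1 :=
  PTG.mem_outTrans.2 ⟨hmv.1, hmv.2.1⟩

lemma outTrans_nonempty (hwf : G.WF) {ℓ : G.Loc} (hℓ : G.owner ℓ ≠ Owner.final) :
    (G.outTrans ℓ).Nonempty := by
  obtain ⟨_, _, _, _, hmv⟩ := hwf.2.2.2.2 ℓ 0 hℓ le_rfl (Nat.cast_nonneg _)
  exact ⟨_, hmv.mem_outTrans⟩

lemma natAbs_price_le_PT {δ : PTrans G.Loc} (hδ : δ ∈ G.trans) : δ.price.natAbs ≤ G.PT :=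
  Finset.le_sup (f := fun δ : PTrans G.Loc => δ.price.natAbs) hδ

/-- One round of the game played without delay at clock value `ν`, the continuation values
being `V`. -/
noncomputable def bellman (G : PTG) (ν : ℝ) (V : G.Loc → EReal) (ℓ : G.Loc) : EReal :=
  match G.owner ℓ with
  | Owner.final => (G.fcost ℓ ν : EReal)
  | Owner.min => (G.outTrans ℓ).inf fun δ => δ.valueThrough V
  | Owner.max => (G.outTrans ℓ).sup fun δ => δ.valueThrough V

section Bellman

variable {ν : ℝ} {V W : G.Loc → EReal} {ℓ : G.Loc}

lemma bellman_of_final (h : G.owner ℓ = Owner.final) : G.bellman ν V ℓ = G.fcost ℓ ν := by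
  simp [bellman, h]

lemma bellman_of_min (h : G.owner ℓ = Owner.min) :
    G.bellman ν V ℓ = (G.outTrans ℓ).inf fun δ => δ.valueThrough V := by
  simp [bellman, h]

lemma bellman_of_max (h : G.owner ℓ = Owner.max) :
    G.bellman ν V ℓ = (G.outTrans ℓ).sup fun δ => δ.valueThrough V := by
  simp [bellman, h]

lemma bellman_mono : Monotone (G.bellman ν) := by
  intro V W hVW ℓ
  cases h : G.owner ℓ
  · simp only [bellman_of_min h]
    exact Finset.inf_mono_fun fun δ _ => δ.valueThrough_mono hVW
  · simp only [bellman_of_max h]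
    exact Finset.sup_mono_fun fun δ _ => δ.valueThrough_mono hVW
  · simp only [bellman_of_final h, le_refl]

lemma bellman_le_of_min (h : G.owner ℓ = Owner.min) {δ : PTrans G.Loc}
    (hδ : δ ∈ G.outTrans ℓ) : G.bellman ν V ℓ ≤ δ.valueThrough V := by
  rw [bellman_of_min h]
  exact Finset.inf_le hδ

lemma le_bellman_of_max (h : G.owner ℓ = Owner.max) {δ : PTrans G.Loc}
    (hδ : δ ∈ G.outTrans ℓ) : δ.valueThrough V ≤ G.bellman ν V ℓ := by
  rw [bellman_of_max h]
  exact Finset.le_sup (f := fun δ => δ.valueThrough V) hδ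

lemma exists_optimal_move_of_le (hwf : G.WF) (hℓ : G.owner ℓ ≠ Owner.final) (hWV : W ≤ V)
    (h : G.bellman ν V ℓ = G.bellman ν W ℓ) :
    ∃ δ ∈ G.outTrans ℓ, δ.valueThrough V = G.bellman ν V ℓ ∧
      δ.valueThrough W = G.bellman ν V ℓ := by
  have hle : ∀ δ ∈ G.outTrans ℓ, δ.valueThrough W ≤ δ.valueThrough V :=
    fun δ _ => δ.valueThrough_mono hWV
  cases ho : G.owner ℓ
  · simp only [bellman_of_min ho] at h ⊢
    exact Finset.exists_eq_inf_of_le_of_inf_eq (outTrans_nonempty hwf hℓ) hle h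
  · simp only [bellman_of_max ho] at h ⊢
    exact Finset.exists_eq_sup_of_le_of_sup_eq (outTrans_nonempty hwf hℓ) hle h
  · exact absurd ho hℓ

lemma exists_optimal_move (hwf : G.WF) (hℓ : G.owner ℓ ≠ Owner.final) :
    ∃ δ ∈ G.outTrans ℓ, δ.valueThrough V = G.bellman ν V ℓ := by
  obtain ⟨δ, hδ, h, -⟩ := exists_optimal_move_of_le (ν := ν) hwf hℓ le_rfl rfl
  exact ⟨δ, hδ, h⟩

lemma bellman_iInf {V : ℕ → G.Loc → EReal} (hV : Antitone V) :
    G.bellman ν (⨅ n, V n) = ⨅ n, G.bellman ν (V n) := by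
  ext ℓ
  have hcont : ∀ δ : PTrans G.Loc, δ.valueThrough (⨅ n, V n) = ⨅ n, δ.valueThrough (V n) :=
    fun δ => by simp only [PTrans.valueThrough, iInf_apply, EReal.coe_add_iInf]
  simp only [iInf_apply]
  cases h : G.owner ℓ
  · simp only [bellman_of_min h, hcont, Finset.inf_iInf_comm]
  · simp only [bellman_of_max h, hcont]
    exact Finset.sup_iInf_of_antitone _ fun δ _ _ hmn => δ.valueThrough_mono (hV hmn)
  · simp only [bellman_of_final h, iInf_const]

end Bellman

/-- The value of the game cut off after `n` rounds, unfinished plays being worth `⊤`. -/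
noncomputable def valueIter (G : PTG) (ν : ℝ) : ℕ → G.Loc → EReal
  | 0 => fun ℓ => if G.owner ℓ = Owner.final then (G.fcost ℓ ν : EReal) else ⊤
  | n + 1 => G.bellman ν (G.valueIter ν n)

noncomputable def limValue (G : PTG) (ν : ℝ) : G.Loc → EReal := ⨅ n, G.valueIter ν n

def finalLocs (G : PTG) : Finset G.Loc := Finset.univ.filter fun ℓ => G.owner ℓ = Owner.final

section ValueIteration

variable {ν : ℝ} {ℓ : G.Loc}

lemma valueIter_succ (n : ℕ) : G.valueIter ν (n + 1) = G.bellman ν (G.valueIter ν n) := rfl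

lemma valueIter_zero_of_not_final (h : G.owner ℓ ≠ Owner.final) : G.valueIter ν 0 ℓ = ⊤ :=
  if_neg h

lemma valueIter_of_final (h : G.owner ℓ = Owner.final) (n : ℕ) :
    G.valueIter ν n ℓ = G.fcost ℓ ν := by
  cases n with
  | zero => exact if_pos h
  | succ n => exact bellman_of_final h

lemma valueIter_antitone : Antitone (G.valueIter ν) := by
  refine antitone_nat_of_succ_le fun n => ?_
  induction n with
  | zero =>
    intro ℓ
    by_cases h : G.owner ℓ = Owner.final
    · rw [valueIter_of_final h, valueIter_of_final h]
    · rw [valueIter_zero_of_not_final h]; exact le_top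
  | succ n ih => exact bellman_mono ih

lemma limValue_apply : G.limValue ν ℓ = ⨅ n, G.valueIter ν n ℓ := iInf_apply

lemma limValue_le_valueIter (n : ℕ) : G.limValue ν ≤ G.valueIter ν n := iInf_le _ n

lemma limValue_of_final (h : G.owner ℓ = Owner.final) : G.limValue ν ℓ = G.fcost ℓ ν := by
  simp [limValue_apply, valueIter_of_final h]

lemma bellman_limValue : G.bellman ν (G.limValue ν) = G.limValue ν := by
  rw [limValue, bellman_iInf valueIter_antitone]
  exact le_antisymm (le_iInf fun n => iInf_le_of_le n (valueIter_antitone n.le_succ))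
    (le_iInf fun n => iInf_le _ (n + 1))

lemma add_int_mem_Zstar {x : ℝ} (hx : x ∈ G.Zstar ν) (k : ℤ) :
    (k : ℝ) + x ∈ G.Zstar ν := by
  obtain ⟨n, ℓ, hℓ, rfl⟩ := hx
  exact ⟨k + n, ℓ, hℓ, by push_cast; ring⟩

lemma fcost_mem_Zstar (h : G.owner ℓ = Owner.final) : G.fcost ℓ ν ∈ G.Zstar ν :=
  ⟨0, ℓ, h, by simp⟩

lemma valueIter_mem (hwf : G.WF) (n : ℕ) (ℓ : G.Loc) :
    G.valueIter ν n ℓ = ⊤ ∨ ∃ x ∈ G.Zstar ν, G.valueIter ν n ℓ = x := by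
  by_cases hℓ : G.owner ℓ = Owner.final
  · exact Or.inr ⟨_, fcost_mem_Zstar hℓ, valueIter_of_final hℓ n⟩
  induction n generalizing ℓ with
  | zero => exact Or.inl (valueIter_zero_of_not_final hℓ)
  | succ n ih =>
    obtain ⟨δ, -, hδ⟩ := exists_optimal_move (V := G.valueIter ν n) (ν := ν) hwf hℓ
    rw [valueIter_succ, ← hδ, PTrans.valueThrough]
    by_cases hδf : G.owner δ.tgt = Owner.final
    · exact Or.inr ⟨_, add_int_mem_Zstar (fcost_mem_Zstar hδf) δ.price,
        by rw [valueIter_of_final hδf, EReal.coe_add]⟩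
    rcases ih δ.tgt hδf with h | ⟨x, hx, h⟩
    · exact Or.inl (by rw [h, EReal.coe_add_top])
    · exact Or.inr ⟨_, add_int_mem_Zstar hx δ.price, by rw [h, EReal.coe_add]⟩

lemma Zstar_inter_Icc_subset (ν a b : ℝ) :
    G.Zstar ν ∩ Set.Icc a b ⊆ ↑(G.finalLocs.biUnion fun ℓ =>
      (Finset.Icc ⌈a - G.fcost ℓ ν⌉ ⌊b - G.fcost ℓ ν⌋).image
        fun k : ℤ => (k : ℝ) + G.fcost ℓ ν) := by
  rintro _ ⟨⟨k, ℓ, hℓ, rfl⟩, hak, hkb⟩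
  refine Finset.mem_coe.2 (Finset.mem_biUnion.2
    ⟨ℓ, Finset.mem_filter.2 ⟨Finset.mem_univ _, hℓ⟩,
    Finset.mem_image.2 ⟨k, Finset.mem_Icc.2 ⟨Int.ceil_le.2 ?_, Int.le_floor.2 ?_⟩, rfl⟩⟩)
  · linarith
  · linarith

lemma Zstar_inter_Icc_finite (ν a b : ℝ) : (G.Zstar ν ∩ Set.Icc a b).Finite :=
  (Finset.finite_toSet _).subset (Zstar_inter_Icc_subset ν a b)

lemma ncard_Zstar_inter_Icc_le {a b : ℝ} (hab : a ≤ b + 1) :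
    ((G.Zstar ν ∩ Set.Icc a b).ncard : ℝ) ≤ G.nFin * (b - a + 1) := by
  calc ((G.Zstar ν ∩ Set.Icc a b).ncard : ℝ)
      ≤ ∑ ℓ ∈ G.finalLocs,
          (((Finset.Icc ⌈a - G.fcost ℓ ν⌉ ⌊b - G.fcost ℓ ν⌋).image
            fun k : ℤ => (k : ℝ) + G.fcost ℓ ν).card : ℝ) := by
        have := (Set.ncard_le_ncard (Zstar_inter_Icc_subset (G := G) ν a b)
          (Finset.finite_toSet _)).trans
            ((Set.ncard_coe_finset _).trans_le Finset.card_biUnion_le)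
        exact_mod_cast this
    _ ≤ ∑ ℓ ∈ G.finalLocs, (b - a + 1) := by
        refine Finset.sum_le_sum fun ℓ _ => ?_
        refine (Nat.cast_le.2 Finset.card_image_le).trans ?_
        exact (Int.card_Icc_ceil_floor_le (by linarith)).trans_eq (by ring)
    _ = G.nFin * (b - a + 1) := by rw [Finset.sum_const, nsmul_eq_mul]; rfl

end ValueIteration

/-- `0` if value iteration never reaches its limit at `ℓ`. -/
noncomputable def stabRank (G : PTG) (ν : ℝ) (ℓ : G.Loc) : ℕ :=
  sInf {n | G.valueIter ν n ℓ = G.limValue ν ℓ}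

noncomputable def rankedUpTo (G : PTG) (ν : ℝ) (K : ℕ) : Finset G.Loc :=
  Finset.univ.filter fun ℓ => G.stabRank ν ℓ ∈ Finset.Ioc 0 K

section Stabilisation

variable {ν : ℝ} {ℓ : G.Loc}

/-- The iterates lie in `Z*_ν ∪ {⊤}`, which is discrete. -/
lemma exists_valueIter_eq_limValue (hwf : G.WF) {v : ℝ} (hv : G.limValue ν ℓ = v) :
    ∃ n, G.valueIter ν n ℓ = G.limValue ν ℓ := by
  have hlt : ⨅ n, G.valueIter ν n ℓ < ⊤ := by
    rw [← limValue_apply, hv]; exact EReal.coe_lt_top v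
  obtain ⟨N, hN⟩ := iInf_lt_iff.1 hlt
  obtain ⟨x, -, hx⟩ := (valueIter_mem hwf N ℓ).resolve_left hN.ne
  rw [limValue_apply]
  refine Antitone.exists_eq_iInf_of_finite (fun m n h => valueIter_antitone h ℓ) N
    (((Zstar_inter_Icc_finite (G := G) ν v x).image fun y : ℝ => (y : EReal)).subset ?_)
  rintro _ ⟨⟨n, rfl⟩, hn⟩
  simp only [Set.mem_Iic] at hn ⊢
  obtain ⟨y, hy, h⟩ := (valueIter_mem (ν := ν) hwf n ℓ).resolve_left fun h => by
    rw [h, hx] at hn; exact EReal.coe_ne_top x (top_le_iff.1 hn)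
  have hvy : (v : EReal) ≤ y := h ▸ hv ▸ limValue_le_valueIter n ℓ
  rw [h, hx] at hn
  exact ⟨y, ⟨hy, EReal.coe_le_coe_iff.1 hvy, EReal.coe_le_coe_iff.1 hn⟩, h.symm⟩

lemma mem_rankedUpTo {K : ℕ} :
    ℓ ∈ G.rankedUpTo ν K ↔ 0 < G.stabRank ν ℓ ∧ G.stabRank ν ℓ ≤ K := by
  simp [rankedUpTo]

lemma stabRank_le {n : ℕ} (h : G.valueIter ν n ℓ = G.limValue ν ℓ) :
    G.stabRank ν ℓ ≤ n :=
  Nat.sInf_le h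

lemma stabRank_of_final (h : G.owner ℓ = Owner.final) : G.stabRank ν ℓ = 0 :=
  Nat.le_zero.1 (stabRank_le (by rw [valueIter_of_final h, limValue_of_final h]))

lemma exists_move_stabRank_lt (hwf : G.WF) (hℓ : G.owner ℓ ≠ Owner.final) {v : ℝ}
    (hv : G.limValue ν ℓ = v) :
    ∃ δ ∈ G.outTrans ℓ, G.limValue ν δ.tgt = ((v - δ.price : ℝ) : EReal) ∧
      G.stabRank ν δ.tgt < G.stabRank ν ℓ := by
  have hN : G.valueIter ν (G.stabRank ν ℓ) ℓ = G.limValue ν ℓ :=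
    Nat.sInf_mem (exists_valueIter_eq_limValue hwf hv)
  obtain ⟨N, hN'⟩ : ∃ N, G.stabRank ν ℓ = N + 1 :=
    Nat.exists_eq_succ_of_ne_zero fun h0 => by
      rw [h0, valueIter_zero_of_not_final hℓ, hv] at hN; exact EReal.coe_ne_top v hN.symm
  rw [hN', valueIter_succ, ← bellman_limValue] at hN
  obtain ⟨δ, hδ, hV, hW⟩ := exists_optimal_move_of_le hwf hℓ (limValue_le_valueIter N) hN
  have hval : G.bellman ν (G.valueIter ν N) ℓ = v := by rw [hN, bellman_limValue, hv]
  refine ⟨δ, hδ, EReal.eq_sub_of_coe_add_eq (hW.trans hval), ?_⟩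
  rw [hN']
  exact Nat.lt_succ_of_le (stabRank_le (EReal.coe_add_left_cancel (hV.trans hW.symm)))

/-- Following moves of decreasing stabilisation rank from `ℓ` reaches a final location; the
locations met on the way have distinct positive ranks, whence the bound on `k`. -/
lemma exists_eq_int_add_fcost (hwf : G.WF) {v : ℝ} (hv : G.limValue ν ℓ = v) :
    ∃ (k : ℤ) (ℓf : G.Loc), G.owner ℓf = Owner.final ∧ v = k + G.fcost ℓf ν ∧
      k.natAbs ≤ G.PT * (G.rankedUpTo ν (G.stabRank ν ℓ)).card := by
  induction hK : G.stabRank ν ℓ using Nat.strong_induction_on generalizing ℓ v with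
  | _ K ih =>
  by_cases hℓ : G.owner ℓ = Owner.final
  · rw [limValue_of_final hℓ, EReal.coe_eq_coe_iff] at hv
    exact ⟨0, ℓ, hℓ, by simp [hv], by simp⟩
  obtain ⟨δ, hδ, hw, hlt⟩ := exists_move_stabRank_lt hwf hℓ hv
  rw [hK] at hlt
  obtain ⟨k, ℓf, hℓf, hwk, hk⟩ := ih _ hlt hw rfl
  have hnot : ℓ ∉ G.rankedUpTo ν (G.stabRank ν δ.tgt) := by
    simp [mem_rankedUpTo, hK, hlt.not_ge]
  have hsub : insert ℓ (G.rankedUpTo ν (G.stabRank ν δ.tgt)) ⊆ G.rankedUpTo ν K := by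
    intro ℓ' hℓ'
    rw [mem_rankedUpTo]
    rcases Finset.mem_insert.1 hℓ' with rfl | hℓ'
    · exact ⟨hK ▸ (Nat.zero_le _).trans_lt hlt, hK.le⟩
    · exact ⟨(mem_rankedUpTo.1 hℓ').1, (mem_rankedUpTo.1 hℓ').2.trans hlt.le⟩
  refine ⟨δ.price + k, ℓf, hℓf, by push_cast; linarith, ?_⟩
  calc (δ.price + k).natAbs ≤ δ.price.natAbs + k.natAbs := Int.natAbs_add_le _ _
    _ ≤ G.PT + G.PT * (G.rankedUpTo ν (G.stabRank ν δ.tgt)).card :=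
        add_le_add (natAbs_price_le_PT (mem_outTrans.1 hδ).1) hk
    _ = G.PT * (insert ℓ (G.rankedUpTo ν (G.stabRank ν δ.tgt))).card := by
        rw [Finset.card_insert_of_notMem hnot]; ring
    _ ≤ G.PT * (G.rankedUpTo ν K).card := Nat.mul_le_mul_left _ (Finset.card_le_card hsub)

end Stabilisation

section Bounds

variable {r ν : ℝ}

lemma Pf_nonneg : 0 ≤ G.Pf r :=
  Real.sSup_nonneg (by rintro _ ⟨_, _, _, _, _, rfl⟩; exact abs_nonneg _)

lemma abs_fcost_le_Pf (hwf : G.WF) {ℓ : G.Loc} (hℓ : G.owner ℓ = Owner.final) (h0 : 0 ≤ ν)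
    (hνr : ν ≤ r) : |G.fcost ℓ ν| ≤ G.Pf r := by
  refine le_csSup ?_ ⟨ℓ, ν, hℓ, h0, hνr, rfl⟩
  have hbound : ∀ ℓ : G.Loc, ∃ C, G.owner ℓ = Owner.final →
      ∀ x ∈ Set.Icc 0 r, |G.fcost ℓ x| ≤ C := by
    intro ℓ
    by_cases hℓ : G.owner ℓ = Owner.final
    · obtain ⟨a, b, hab⟩ := hwf.2.2.2.1 ℓ hℓ
      obtain ⟨C, hC⟩ := isCompact_Icc.exists_bound_of_continuousOn (f := G.fcost ℓ)
        (by rw [funext hab]; fun_prop)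
      exact ⟨C, fun _ => hC⟩
    · exact ⟨0, fun h => absurd h hℓ⟩
  choose C hC using hbound
  obtain ⟨B, hB⟩ := (Set.finite_range C).bddAbove
  exact ⟨B, by
    rintro _ ⟨ℓ, x, hℓ, h0, h1, rfl⟩
    exact (hC ℓ hℓ x ⟨h0, h1⟩).trans (hB ⟨ℓ, rfl⟩)⟩

lemma possval_eq : G.possval r ν = G.Zstar ν ∩
    Set.Icc (-(((G.nLoc : ℝ) - 1) * G.PT) - G.Pf r) (G.nLoc * G.PT + G.Pf r) := rfl

lemma possval_finite : (G.possval r ν).Finite := by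
  rw [possval_eq]; exact Zstar_inter_Icc_finite _ _ _

lemma ncard_possval_le :
    ((G.possval r ν).ncard : ℝ) ≤
      G.nFin * ((2 * (G.nLoc : ℝ) - 1) * G.PT + 2 * G.Pf r + 1) := by
  rcases G.finalLocs.eq_empty_or_nonempty with h | ⟨ℓ, hℓ⟩
  · have hZ : G.Zstar ν = ∅ := Set.eq_empty_of_forall_notMem fun _ ⟨_, ℓ, hℓ, _⟩ =>
      Finset.notMem_empty ℓ (h ▸ Finset.mem_filter.2 ⟨Finset.mem_univ ℓ, hℓ⟩)
    have hn : G.nFin = 0 := by rw [show G.nFin = G.finalLocs.card from rfl, h, Finset.card_empty]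
    simp [possval_eq, hZ, hn]
  · have hL : (1 : ℝ) ≤ G.nLoc := Nat.one_le_cast.2 (Fintype.card_pos_iff.2 ⟨ℓ⟩)
    have hPT : (0 : ℝ) ≤ G.PT := Nat.cast_nonneg _
    rw [possval_eq]
    refine (ncard_Zstar_inter_Icc_le ?_).trans_eq (by ring)
    nlinarith [G.Pf_nonneg (r := r)]

lemma limValue_mem_possval (hwf : G.WF) (h0 : 0 ≤ ν) (hνr : ν ≤ r) {ℓ : G.Loc} {v : ℝ}
    (hv : G.limValue ν ℓ = v) : v ∈ G.possval r ν := by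
  obtain ⟨k, ℓf, hℓf, rfl, hk⟩ := exists_eq_int_add_fcost hwf hv
  set c := (G.rankedUpTo ν (G.stabRank ν ℓ)).card
  have hc : c < G.nLoc :=
    Finset.card_lt_card (Finset.filter_ssubset.2 ⟨ℓf, Finset.mem_univ _,
      by simp [stabRank_of_final hℓf]⟩)
  have hPT : (0 : ℝ) ≤ G.PT := Nat.cast_nonneg _
  have hk' : |(k : ℝ)| ≤ ((G.nLoc : ℝ) - 1) * G.PT := by
    have hk : (k.natAbs : ℝ) ≤ G.PT * c := by exact_mod_cast hk
    have hc : (c : ℝ) + 1 ≤ G.nLoc := by exact_mod_cast hc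
    rw [Nat.cast_natAbs, Int.cast_abs] at hk
    nlinarith
  have hφ := abs_fcost_le_Pf hwf hℓf h0 hνr
  refine ⟨⟨k, ℓf, hℓf, rfl⟩, ?_, ?_⟩
  · linarith [neg_abs_le (k : ℝ), neg_abs_le (G.fcost ℓf ν)]
  · linarith [le_abs_self (k : ℝ), le_abs_self (G.fcost ℓf ν)]

end Bounds

lemma validFrom_append (s : G.Config) (l : List (ℝ × PTrans G.Loc × G.Config))
    (x : ℝ × PTrans G.Loc × G.Config) :
    G.ValidFrom s (l ++ [x]) ↔
      G.ValidFrom s l ∧ ∃ c, G.Move (Hist.lastFrom s l) x.2.2 x.1 x.2.1 c := by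
  induction l generalizing s with
  | nil => simp [PTG.ValidFrom, Hist.lastFrom]
  | cons a l ih => simp only [List.cons_append, PTG.ValidFrom, Hist.lastFrom, ih, and_assoc]

lemma Move.eq_nextCfg {s s' : G.Config} {t : ℝ} {δ : PTrans G.Loc} {c : ℝ}
    (hmv : G.Move s s' t δ c) : s' = G.nextCfg s (t, δ) :=
  Prod.ext hmv.2.2.2.2.2.1 hmv.2.2.2.2.2.2.1

def turn (G : PTG) (σ τ : StratFun G.Loc) (h : Hist G.Loc) : ℝ × PTrans G.Loc :=
  if G.owner h.last.1 = Owner.min then σ h else τ h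

lemma exists_move_turn {σ τ : StratFun G.Loc} (hσ : G.MinValid σ) (hτ : G.MaxValid τ)
    {h : Hist G.Loc} (hv : G.HistValid h) (hf : G.owner h.last.1 ≠ Owner.final) :
    ∃ c, G.Move h.last (G.nextCfg h.last (G.turn σ τ h)) (G.turn σ τ h).1
      (G.turn σ τ h).2 c := by
  have hmove : ∃ s' c, G.Move h.last s' (G.turn σ τ h).1 (G.turn σ τ h).2 c := by
    cases ho : G.owner h.last.1
    · simpa [turn, ho] using hσ h hv ho
    · simpa [turn, ho] using hτ h hv ho
    · exact absurd ho hf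
  obtain ⟨s', c, hmv⟩ := hmove
  exact ⟨c, hmv.eq_nextCfg ▸ hmv⟩

lemma turn_mem_outTrans {σ τ : StratFun G.Loc} (hσ : G.MinValid σ) (hτ : G.MaxValid τ)
    {h : Hist G.Loc} (hv : G.HistValid h) (hf : G.owner h.last.1 ≠ Owner.final) :
    (G.turn σ τ h).2 ∈ G.outTrans h.last.1 :=
  (exists_move_turn hσ hτ hv hf).choose_spec.mem_outTrans

section Plays

variable {σ τ : StratFun G.Loc} {s₀ : G.Config} {n : ℕ}

lemma start_histOf (n : ℕ) : (G.histOf σ τ s₀ n).start = s₀ := by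
  induction n with
  | zero => rfl
  | succ n ih => by_cases hf : G.owner (G.histOf σ τ s₀ n).last.1 = Owner.final <;>
      simp [PTG.histOf, hf, ih]

lemma histOf_succ_of_final (hf : G.owner (G.histOf σ τ s₀ n).last.1 = Owner.final) :
    G.histOf σ τ s₀ (n + 1) = G.histOf σ τ s₀ n := by
  simp [PTG.histOf, hf]

lemma histOf_succ_of_not_final (hf : G.owner (G.histOf σ τ s₀ n).last.1 ≠ Owner.final) :
    G.histOf σ τ s₀ (n + 1) =
      ⟨(G.histOf σ τ s₀ n).start, (G.histOf σ τ s₀ n).steps ++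
        [((G.turn σ τ (G.histOf σ τ s₀ n)).1, (G.turn σ τ (G.histOf σ τ s₀ n)).2,
          G.nextCfg (G.histOf σ τ s₀ n).last (G.turn σ τ (G.histOf σ τ s₀ n)))]⟩ := by
  simp only [PTG.histOf, hf, if_false]; rfl

lemma last_histOf_succ (hf : G.owner (G.histOf σ τ s₀ n).last.1 ≠ Owner.final) :
    (G.histOf σ τ s₀ (n + 1)).last =
      G.nextCfg (G.histOf σ τ s₀ n).last (G.turn σ τ (G.histOf σ τ s₀ n)) := by
  rw [histOf_succ_of_not_final hf]; exact Hist.lastFrom_append _ _ _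

lemma discSum_histOf_succ (hf : G.owner (G.histOf σ τ s₀ n).last.1 ≠ Owner.final) :
    (G.histOf σ τ s₀ (n + 1)).discSum =
      (G.histOf σ τ s₀ n).discSum + (G.turn σ τ (G.histOf σ τ s₀ n)).2.price := by
  rw [histOf_succ_of_not_final hf]; simp [Hist.discSum]

lemma final_histOf_of_le {m : ℕ} (hm : G.owner (G.histOf σ τ s₀ m).last.1 = Owner.final)
    (hmn : m ≤ n) : G.owner (G.histOf σ τ s₀ n).last.1 = Owner.final := by
  induction n, hmn using Nat.le_induction with
  | base => exact hm
  | succ n _ ih => rwa [histOf_succ_of_final ih]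

lemma length_histOf (hf : G.owner (G.histOf σ τ s₀ n).last.1 ≠ Owner.final) :
    (G.histOf σ τ s₀ n).steps.length = n := by
  induction n with
  | zero => rfl
  | succ n ih =>
    have hfn : G.owner (G.histOf σ τ s₀ n).last.1 ≠ Owner.final :=
      fun h => hf (final_histOf_of_le h n.le_succ)
    rw [histOf_succ_of_not_final hfn, List.length_append, ih hfn, List.length_singleton]

lemma histValid_histOf (hσ : G.MinValid σ) (hτ : G.MaxValid τ) (h0 : 0 ≤ s₀.2)
    (hM : s₀.2 ≤ G.M) (n : ℕ) : G.HistValid (G.histOf σ τ s₀ n) := by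
  induction n with
  | zero => exact ⟨h0, hM, trivial⟩
  | succ n ih =>
    by_cases hf : G.owner (G.histOf σ τ s₀ n).last.1 = Owner.final
    · rwa [histOf_succ_of_final hf]
    · rw [histOf_succ_of_not_final hf]
      exact ⟨by rwa [start_histOf], by rwa [start_histOf],
        (validFrom_append _ _ _).2 ⟨ih.2.2, exists_move_turn hσ hτ ih hf⟩⟩

end Plays

lemma IsSPTG.le_M {r : ℝ} (hsptg : G.IsSPTG r) (hwf : G.WF) {δ : PTrans G.Loc}
    (hδ : δ ∈ G.trans) : r ≤ G.M :=
  (hsptg.2.2 δ hδ).2.1 ▸ (hwf.2.1 δ hδ).2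

lemma IsSPTG.M_le {r : ℝ} (hsptg : G.IsSPTG r) (hwf : G.WF) {ℓ : G.Loc}
    (hℓ : G.owner ℓ ≠ Owner.final) : (G.M : ℝ) ≤ r := by
  obtain ⟨_, t, δ, _, hδ, -, ht, -, hguard, -⟩ :=
    hwf.2.2.2.2 ℓ G.M hℓ (Nat.cast_nonneg _) le_rfl
  obtain ⟨-, hhi, -, hhiOpen, -⟩ := hsptg.2.2 δ hδ
  have := hguard.2
  simp only [hhiOpen, hhi, Bool.false_eq_true, if_false] at this
  linarith

namespace IsUrgentSPTG

variable {r : ℝ} (hG : G.IsUrgentSPTG r)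
include hG

lemma move_spec {s s' : G.Config} {t : ℝ} {δ : PTrans G.Loc} {c : ℝ}
    (hmv : G.Move s s' t δ c) :
    t = 0 ∧ s'.2 = s.2 ∧ c = δ.price := by
  obtain ⟨hδ, hsrc, -, hurg, -, -, hclock, hc⟩ := hmv
  have ht : t = 0 := hurg (hG.urgent _ (hsrc ▸ hG.wf.1 δ hδ))
  refine ⟨ht, ?_, by rw [hc, ht, zero_mul, add_zero]⟩
  rw [hclock, (hG.sptg.2.2 δ hδ).2.2.2.2, ht, add_zero, if_neg Bool.false_ne_true]

lemma validFrom_spec {s : G.Config} {l : List (ℝ × PTrans G.Loc × G.Config)}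
    (hl : G.ValidFrom s l) : (Hist.lastFrom s l).2 = s.2 ∧
      Hist.costFrom G.price s l = (((l.map fun st => st.2.1.price).sum : ℤ) : ℝ) := by
  induction l generalizing s with
  | nil => exact ⟨rfl, by simp [Hist.costFrom]⟩
  | cons a l ih =>
    obtain ⟨⟨c, hmv⟩, hl⟩ := hl
    obtain ⟨ht, hclock, -⟩ := hG.move_spec hmv
    obtain ⟨ih1, ih2⟩ := ih hl
    refine ⟨ih1.trans hclock, ?_⟩
    simp only [Hist.costFrom, ih2, ht, List.map_cons, List.sum_cons, zero_mul, add_zero]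
    push_cast; ring

lemma last_clock {h : Hist G.Loc} (hv : G.HistValid h) : h.last.2 = h.start.2 :=
  (hG.validFrom_spec hv.2.2).1

lemma accCost_eq {h : Hist G.Loc} (hv : G.HistValid h) : G.accCost h = h.discSum :=
  (hG.validFrom_spec hv.2.2).2

lemma move_of_mem_outTrans {ℓ : G.Loc} {δ : PTrans G.Loc} (hδ : δ ∈ G.outTrans ℓ) {x : ℝ}
    (h0 : 0 ≤ x) (hx : x ≤ G.M) : G.Move (ℓ, x) (δ.tgt, x) 0 δ δ.price := by
  obtain ⟨hδ, hsrc⟩ := mem_outTrans.1 hδ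
  obtain ⟨hlo, hhi, hloOpen, hhiOpen, hreset⟩ := hG.sptg.2.2 δ hδ
  have hxr : x ≤ r := hx.trans (hG.sptg.M_le hG.wf (hsrc ▸ hG.wf.1 δ hδ))
  refine ⟨hδ, hsrc, le_rfl, fun _ => rfl, ?_, rfl, by simp [hreset], by ring⟩
  simp only [PTrans.memGuard, hlo, hhi, hloOpen, hhiOpen, Bool.false_eq_true, if_false, add_zero]
  exact ⟨h0, hxr⟩

end IsUrgentSPTG

def markovStrat (pick : ℕ → G.Loc → PTrans G.Loc) : StratFun G.Loc :=
  fun h => (0, pick h.steps.length h.last.1)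

lemma stratValid_markovStrat {r : ℝ} (hG : G.IsUrgentSPTG r)
    {pick : ℕ → G.Loc → PTrans G.Loc}
    (hpick : ∀ n ℓ, G.owner ℓ ≠ Owner.final → pick n ℓ ∈ G.outTrans ℓ) {P : Owner}
    (hP : P ≠ Owner.final) : G.StratValid P (markovStrat pick) := by
  intro h hv hown
  have hclock := hG.last_clock hv
  exact ⟨_, _, hG.move_of_mem_outTrans (hpick _ _ (hown ▸ hP)) (hclock ▸ hv.1)
    (hclock ▸ hv.2.1)⟩

lemma exists_pick (hwf : G.WF) (ν : ℝ) (V : ℕ → G.Loc → EReal) :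
    ∃ pick : ℕ → G.Loc → PTrans G.Loc, ∀ n ℓ, G.owner ℓ ≠ Owner.final →
      pick n ℓ ∈ G.outTrans ℓ ∧
        (pick n ℓ).valueThrough (V n) = G.bellman ν (V n) ℓ := by
  have h : ∀ n ℓ, ∃ δ : PTrans G.Loc, G.owner ℓ ≠ Owner.final →
      δ ∈ G.outTrans ℓ ∧ δ.valueThrough (V n) = G.bellman ν (V n) ℓ := by
    intro n ℓ
    by_cases hℓ : G.owner ℓ = Owner.final
    · exact ⟨⟨ℓ, 0, 0, false, false, false, 0, ℓ⟩, fun h => absurd hℓ h⟩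
    · obtain ⟨δ, hδ, h⟩ := exists_optimal_move hwf hℓ
      exact ⟨δ, fun _ => ⟨hδ, h⟩⟩
  choose pick hpick using h
  exact ⟨pick, hpick⟩

noncomputable def potential (G : PTG) (σ τ : StratFun G.Loc) (s₀ : G.Config)
    (Φ : ℕ → G.Loc → EReal) (n : ℕ) : EReal :=
  (((G.histOf σ τ s₀ n).discSum : ℝ) : EReal) + Φ n (G.histOf σ τ s₀ n).last.1

section Potential

variable {r ν : ℝ} {σ τ : StratFun G.Loc} {ℓ₀ : G.Loc} {Φ : ℕ → G.Loc → EReal}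

lemma potential_zero : G.potential σ τ (ℓ₀, ν) Φ 0 = Φ 0 ℓ₀ := by
  simp [potential, PTG.histOf, Hist.discSum, Hist.last, Hist.lastFrom]

lemma potential_succ_of_final {n : ℕ}
    (hΦ : ∀ n ℓ, G.owner ℓ = Owner.final → Φ n ℓ = G.fcost ℓ ν)
    (hf : G.owner (G.histOf σ τ (ℓ₀, ν) n).last.1 = Owner.final) :
    G.potential σ τ (ℓ₀, ν) Φ (n + 1) = G.potential σ τ (ℓ₀, ν) Φ n := by
  simp only [potential, histOf_succ_of_final hf, hΦ _ _ hf]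

lemma potential_succ_of_not_final {n : ℕ}
    (hf : G.owner (G.histOf σ τ (ℓ₀, ν) n).last.1 ≠ Owner.final) :
    G.potential σ τ (ℓ₀, ν) Φ (n + 1) =
      (((G.histOf σ τ (ℓ₀, ν) n).discSum : ℝ) : EReal) +
        (G.turn σ τ (G.histOf σ τ (ℓ₀, ν) n)).2.valueThrough (Φ (n + 1)) := by
  rw [potential, discSum_histOf_succ hf, last_histOf_succ hf, PTrans.valueThrough,
    ← add_assoc, Int.cast_add, EReal.coe_add]
  rfl

lemma playCost_eq_potential (hG : G.IsUrgentSPTG r) (hσ : G.MinValid σ) (hτ : G.MaxValid τ)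
    (h0 : 0 ≤ ν) (hM : ν ≤ G.M)
    (hΦ : ∀ n ℓ, G.owner ℓ = Owner.final → Φ n ℓ = G.fcost ℓ ν)
    (hex : ∃ n, G.owner (G.histOf σ τ (ℓ₀, ν) n).last.1 = Owner.final) :
    G.playCost σ τ (ℓ₀, ν) = G.potential σ τ (ℓ₀, ν) Φ (Nat.find hex) := by
  have hv := histValid_histOf (s₀ := (ℓ₀, ν)) hσ hτ h0 hM (Nat.find hex)
  have hclock : (G.histOf σ τ (ℓ₀, ν) (Nat.find hex)).last.2 = ν := by
    rw [hG.last_clock hv, start_histOf]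
  rw [PTG.playCost, dif_pos hex, potential, hΦ _ _ (Nat.find_spec hex), hG.accCost_eq hv,
    hclock, EReal.coe_add]

variable (hG : G.IsUrgentSPTG r) (hσ : G.MinValid σ) (hτ : G.MaxValid τ) (h0 : 0 ≤ ν)
  (hM : ν ≤ G.M) (hΦ : ∀ n ℓ, G.owner ℓ = Owner.final → Φ n ℓ = G.fcost ℓ ν)
include hG hσ hτ h0 hM hΦ

lemma playCost_le_of_potential
    (hstep : ∀ n, G.owner (G.histOf σ τ (ℓ₀, ν) n).last.1 ≠ Owner.final →
      (G.turn σ τ (G.histOf σ τ (ℓ₀, ν) n)).2.valueThrough (Φ (n + 1)) ≤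
        Φ n (G.histOf σ τ (ℓ₀, ν) n).last.1)
    (htop : ∃ N, ∀ ℓ, G.owner ℓ ≠ Owner.final → Φ N ℓ = ⊤) :
    G.playCost σ τ (ℓ₀, ν) ≤ Φ 0 ℓ₀ := by
  have hanti : Antitone (G.potential σ τ (ℓ₀, ν) Φ) := antitone_nat_of_succ_le fun n => by
    by_cases hf : G.owner (G.histOf σ τ (ℓ₀, ν) n).last.1 = Owner.final
    · rw [potential_succ_of_final hΦ hf]
    · rw [potential_succ_of_not_final hf, potential]
      exact add_le_add_right (hstep n hf) _
  by_cases hex : ∃ n, G.owner (G.histOf σ τ (ℓ₀, ν) n).last.1 = Owner.final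
  · rw [playCost_eq_potential hG hσ hτ h0 hM hΦ hex]
    simpa only [potential_zero] using hanti (Nat.zero_le (Nat.find hex))
  · obtain ⟨N, hN⟩ := htop
    have h := hanti (Nat.zero_le N)
    rw [potential, hN _ (not_exists.1 hex N), EReal.coe_add_top, potential_zero, top_le_iff] at h
    exact h ▸ le_top

lemma le_playCost_of_potential
    (hstep : ∀ n, G.owner (G.histOf σ τ (ℓ₀, ν) n).last.1 ≠ Owner.final →
      Φ n (G.histOf σ τ (ℓ₀, ν) n).last.1 ≤
        (G.turn σ τ (G.histOf σ τ (ℓ₀, ν) n)).2.valueThrough (Φ (n + 1))) :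
    Φ 0 ℓ₀ ≤ G.playCost σ τ (ℓ₀, ν) := by
  have hmono : Monotone (G.potential σ τ (ℓ₀, ν) Φ) := monotone_nat_of_le_succ fun n => by
    by_cases hf : G.owner (G.histOf σ τ (ℓ₀, ν) n).last.1 = Owner.final
    · rw [potential_succ_of_final hΦ hf]
    · rw [potential_succ_of_not_final hf, potential]
      exact add_le_add_right (hstep n hf) _
  by_cases hex : ∃ n, G.owner (G.histOf σ τ (ℓ₀, ν) n).last.1 = Owner.final
  · rw [playCost_eq_potential hG hσ hτ h0 hM hΦ hex]
    simpa only [potential_zero] using hmono (Nat.zero_le (Nat.find hex))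
  · rw [PTG.playCost, dif_neg hex]
    exact le_top

end Potential

section Value

variable {r ν : ℝ}

lemma lval_le_uval (s : G.Config) : G.lval s ≤ G.uval s :=
  iSup_iInf_le_iInf_iSup fun (τ : {τ // G.MaxValid τ}) (σ : {σ // G.MinValid σ}) =>
    G.playCost σ.1 τ.1 s

/-- Min can secure `valueIter ν n` by playing, in round `k`, a move optimal for the
`(n - k)`-round game. -/
lemma uval_le_valueIter (hG : G.IsUrgentSPTG r) (h0 : 0 ≤ ν) (hM : ν ≤ G.M) (ℓ₀ : G.Loc)
    (n : ℕ) : G.uval (ℓ₀, ν) ≤ G.valueIter ν n ℓ₀ := by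
  obtain ⟨pick, hpick⟩ := exists_pick hG.wf ν fun k => G.valueIter ν (n - (k + 1))
  have hσ : G.MinValid (markovStrat pick) :=
    stratValid_markovStrat hG (fun k ℓ hℓ => (hpick k ℓ hℓ).1) (by decide)
  refine (iInf_le _ ⟨_, hσ⟩).trans (iSup_le fun τ => ?_)
  refine playCost_le_of_potential (Φ := fun k => G.valueIter ν (n - k)) hG hσ τ.2 h0 hM
    (fun _ _ hℓ => valueIter_of_final hℓ _) (fun k hk => ?_)
    ⟨n, fun ℓ hℓ => by simpa using valueIter_zero_of_not_final hℓ⟩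
  set h := G.histOf (markovStrat pick) τ.1 (ℓ₀, ν) k
  rcases le_or_gt n k with hnk | hkn
  · rw [Nat.sub_eq_zero_of_le hnk, valueIter_zero_of_not_final hk]
    exact le_top
  rw [show n - k = n - (k + 1) + 1 by omega, valueIter_succ]
  cases ho : G.owner h.last.1
  · have hturn : G.turn (markovStrat pick) τ.1 h = (0, pick k h.last.1) := by
      simp [turn, ho, markovStrat, h, length_histOf hk]
    rw [hturn]
    exact (hpick k _ hk).2.le
  · exact le_bellman_of_max ho
      (turn_mem_outTrans hσ τ.2 (histValid_histOf hσ τ.2 h0 hM k) hk)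
  · exact absurd ho hk

/-- Max can secure `limValue ν` by always playing a move optimal for it. -/
lemma limValue_le_lval (hG : G.IsUrgentSPTG r) (h0 : 0 ≤ ν) (hM : ν ≤ G.M) (ℓ₀ : G.Loc) :
    G.limValue ν ℓ₀ ≤ G.lval (ℓ₀, ν) := by
  obtain ⟨pick, hpick⟩ := exists_pick hG.wf ν fun _ => G.limValue ν
  have hτ : G.MaxValid (markovStrat pick) :=
    stratValid_markovStrat hG (fun k ℓ hℓ => (hpick k ℓ hℓ).1) (by decide)
  refine le_iSup_of_le (⟨_, hτ⟩ : {τ // G.MaxValid τ}) (le_iInf fun σ => ?_)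
  refine le_playCost_of_potential (Φ := fun _ => G.limValue ν) hG σ.2 hτ h0 hM
    (fun _ _ hℓ => limValue_of_final hℓ) fun k hk => ?_
  set h := G.histOf σ.1 (markovStrat pick) (ℓ₀, ν) k
  rw [← congrFun bellman_limValue h.last.1]
  cases ho : G.owner h.last.1
  · exact bellman_le_of_min ho (turn_mem_outTrans σ.2 hτ (histValid_histOf σ.2 hτ h0 hM k) hk)
  · have hturn : G.turn σ.1 (markovStrat pick) h = (0, pick h.steps.length h.last.1) := by
      simp [turn, ho, markovStrat]
    rw [hturn]
    exact (hpick _ _ hk).2.ge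
  · exact absurd ho hk

lemma val_of_final (hG : G.IsUrgentSPTG r) {ℓ : G.Loc} (hℓ : G.owner ℓ = Owner.final) :
    G.val (ℓ, ν) = G.fcost ℓ ν := by
  obtain ⟨pick, hpick⟩ := exists_pick hG.wf ν fun _ => G.limValue ν
  have hvalid : ∀ P : Owner, P ≠ Owner.final → G.StratValid P (markovStrat pick) :=
    fun _ => stratValid_markovStrat hG fun k ℓ hℓ => (hpick k ℓ hℓ).1
  have : Nonempty {σ // G.MinValid σ} := ⟨⟨_, hvalid _ (by decide)⟩⟩
  have : Nonempty {τ // G.MaxValid τ} := ⟨⟨_, hvalid _ (by decide)⟩⟩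
  have hcost : ∀ σ τ : StratFun G.Loc, G.playCost σ τ (ℓ, ν) = G.fcost ℓ ν := by
    intro σ τ
    have hex : ∃ n, G.owner (G.histOf σ τ (ℓ, ν) n).last.1 = Owner.final := ⟨0, hℓ⟩
    rw [PTG.playCost, dif_pos hex, (Nat.find_eq_zero hex).2 hℓ]
    simp [PTG.histOf, PTG.accCost, Hist.costFrom, Hist.last, Hist.lastFrom]
  simp [PTG.val, PTG.lval, PTG.maxValue, hcost]

lemma val_eq_limValue (hG : G.IsUrgentSPTG r) (h0 : 0 ≤ ν) (hνr : ν ≤ r) (ℓ : G.Loc) :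
    G.val (ℓ, ν) = G.limValue ν ℓ := by
  by_cases hℓ : G.owner ℓ = Owner.final
  · rw [val_of_final hG hℓ, limValue_of_final hℓ]
  obtain ⟨δ, hδ⟩ := outTrans_nonempty hG.wf hℓ
  have hM : ν ≤ G.M := hνr.trans (hG.sptg.le_M hG.wf (mem_outTrans.1 hδ).1)
  refine le_antisymm ?_ (limValue_le_lval hG h0 hM ℓ)
  rw [limValue_apply]
  exact (lval_le_uval _).trans (le_iInf (uval_le_valueIter hG h0 hM ℓ))

end Value

end PTG

/-- Corollary 3: in an `r`-SPTG with only urgent (non-final) locations,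
for every `ν ∈ [0, r]` and every location `ℓ`, `Val_G(ℓ, ν)` belongs to
`possval_ν ∪ {−∞, +∞}`; moreover `possval_ν` has at most
`|L_f|·((2|L|−1)·P_T + 2·P_f + 1)` elements. -/
theorem urgent_sptg_possval (G : PTG) (hwf : G.WF) (r : ℚ) (hsptg : G.IsSPTG (r : ℝ))
    (hurg : ∀ ℓ : G.Loc, G.owner ℓ ≠ Owner.final → G.urgent ℓ = true)
    (ν : ℝ) (h0 : 0 ≤ ν) (hν : ν ≤ (r : ℝ)) :
    (∀ ℓ : G.Loc, G.val (ℓ, ν) = ⊤ ∨ G.val (ℓ, ν) = ⊥ ∨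
      ∃ x ∈ G.possval (r : ℝ) ν, G.val (ℓ, ν) = (x : EReal)) ∧
    (G.possval (r : ℝ) ν).Finite ∧
    ((G.possval (r : ℝ) ν).ncard : ℝ) ≤
      (G.nFin : ℝ) * ((2 * (G.nLoc : ℝ) - 1) * (G.PT : ℝ) + 2 * G.Pf (r : ℝ) + 1) := by
  have hG : G.IsUrgentSPTG r := ⟨hwf, hsptg, hurg⟩
  refine ⟨fun ℓ => ?_, PTG.possval_finite, PTG.ncard_possval_le⟩
  rw [PTG.val_eq_limValue hG h0 hν]
  induction hv : G.limValue ν ℓ using EReal.rec with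
  | bot => exact Or.inr (Or.inl rfl)
  | coe v => exact Or.inr (Or.inr ⟨v, PTG.limValue_mem_possval hwf h0 hν hv, rfl⟩)
  | top => exact Or.inl rfl

end PTGPaper
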